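/- arXiv:2509.04603 — 4 statements merged into one kernel-verified Lean document; each statement's English description precedes it below -/
import Mathlib

section
/- If f is a unimodal density on [-1,1] with mode c ∈ (ε,1], increasing on [-1,c], decreasing on [c,1], with ∫_{-1}^0 f = n₁/(n₁+n₂) and ∫_0^1 f = n₂/(n₁+n₂), then ∫_{-ε}^{ε} f ≥ 2ε·n₁/(n₁+n₂). -/
open Set intervalIntegral

/-- Case I: if the mode `c` satisfies `c ∈ (ε, 1]`, then `∫_{-ε}^{ε} f ≥ 2ε·n₁/(n₁+n₂)`. -/
theorem stmt1 (n₁ n₂ c ε : ℝ) (hn₁ : 0 < n₁) (hn₂ : 0 < n₂)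
    (hε : ε ∈ Set.Ioo (0:ℝ) 1) (hc : c ∈ Set.Ioc ε 1)
    (f : ℝ → ℝ)
    (hint : MeasureTheory.IntegrableOn f (Set.Icc (-1) 1))
    (hpos : ∀ x ∈ Set.Icc (-1:ℝ) 1, 0 ≤ f x)
    (hmono : MonotoneOn f (Set.Icc (-1) c))
    (hanti : AntitoneOn f (Set.Icc c 1))
    (hleft : ∫ x in (-1:ℝ)..0, f x = n₁ / (n₁ + n₂))
    (hright : ∫ x in (0:ℝ)..1, f x = n₂ / (n₁ + n₂)) :
    2 * ε * n₁ / (n₁ + n₂) ≤ ∫ x in (-ε)..ε, f x := by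
  obtain ⟨hε0, hε1⟩ := hε
  obtain ⟨hcε, hc1⟩ := hc
  have hI : ∀ a b : ℝ, a ≤ b → -1 ≤ a → b ≤ 1 →
      IntervalIntegrable f MeasureTheory.volume a b := by
    intro a b hab ha hb
    apply MeasureTheory.IntegrableOn.intervalIntegrable
    rw [Set.uIcc_of_le hab]
    exact hint.mono_set (Set.Icc_subset_Icc ha hb)
  -- constant bounds
  have h1 : ∫ x in (-1:ℝ)..(-ε), f x ≤ (1 - ε) * f (-ε) := by
    have := intervalIntegral.integral_mono_on (by linarith : (-1:ℝ) ≤ -ε)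
      (hI (-1) (-ε) (by linarith) le_rfl (by linarith))
      (_root_.intervalIntegrable_const (c := f (-ε)))
      (fun x hx => hmono ⟨hx.1, by linarith [hx.2]⟩ ⟨by linarith, by linarith⟩ hx.2)
    rw [intervalIntegral.integral_const, smul_eq_mul] at this
    linarith
  have h2 : ε * f (-ε) ≤ ∫ x in (-ε)..(0:ℝ), f x := by
    have := intervalIntegral.integral_mono_on (by linarith : (-ε:ℝ) ≤ 0)
      (_root_.intervalIntegrable_const (c := f (-ε)))
      (hI (-ε) 0 (by linarith) (by linarith) (by linarith))
      (fun x hx => hmono ⟨by linarith, by linarith⟩ ⟨by linarith [hx.1], by linarith [hx.2]⟩ hx.1)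
    rw [intervalIntegral.integral_const, smul_eq_mul] at this
    linarith
  have h3 : ∫ x in (-1:ℝ)..(0:ℝ), f x ≤ f 0 := by
    have := intervalIntegral.integral_mono_on (by linarith : (-1:ℝ) ≤ 0)
      (hI (-1) 0 (by linarith) le_rfl (by linarith))
      (_root_.intervalIntegrable_const (c := f 0))
      (fun x hx => hmono ⟨hx.1, by linarith [hx.2]⟩ ⟨by linarith, by linarith⟩ hx.2)
    rw [intervalIntegral.integral_const, smul_eq_mul] at this
    linarith
  have h4 : ε * f 0 ≤ ∫ x in (0:ℝ)..ε, f x := by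
    have := intervalIntegral.integral_mono_on (le_of_lt hε0)
      (_root_.intervalIntegrable_const (c := f 0))
      (hI 0 ε (le_of_lt hε0) (by linarith) (by linarith))
      (fun x hx => hmono ⟨by linarith, by linarith⟩ ⟨by linarith [hx.1], by linarith [hx.2]⟩ hx.1)
    rw [intervalIntegral.integral_const, smul_eq_mul] at this
    linarith
  have hsplit1 : (∫ x in (-1:ℝ)..(-ε), f x) + (∫ x in (-ε)..(0:ℝ), f x)
      = ∫ x in (-1:ℝ)..(0:ℝ), f x :=
    intervalIntegral.integral_add_adjacent_intervals
      (hI (-1) (-ε) (by linarith) le_rfl (by linarith))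
      (hI (-ε) 0 (by linarith) (by linarith) (by linarith))
  have hsplit2 : (∫ x in (-ε)..(0:ℝ), f x) + (∫ x in (0:ℝ)..ε, f x)
      = ∫ x in (-ε)..ε, f x :=
    intervalIntegral.integral_add_adjacent_intervals
      (hI (-ε) 0 (by linarith) (by linarith) (by linarith))
      (hI 0 ε (le_of_lt hε0) (by linarith) (by linarith))
  have hA : 0 ≤ f (-ε) := hpos _ ⟨by linarith, by linarith⟩
  set J := ∫ x in (-1:ℝ)..(-ε), f x
  set I := ∫ x in (-ε)..(0:ℝ), f x
  set K := ∫ x in (0:ℝ)..ε, f x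
  have hS : J + I = n₁ / (n₁ + n₂) := by rw [hsplit1, hleft]
  have hSpos : 0 ≤ n₁ / (n₁ + n₂) := by positivity
  -- I ≥ ε * (J + I)
  have he1 : (0:ℝ) ≤ 1 - ε := by linarith
  have ha : ε * J ≤ ε * ((1 - ε) * f (-ε)) := mul_le_mul_of_nonneg_left h1 hε0.le
  have hb : (1 - ε) * (ε * f (-ε)) ≤ (1 - ε) * I := mul_le_mul_of_nonneg_left h2 he1
  have hIk : ε * (J + I) ≤ I := by nlinarith [ha, hb]
  -- K ≥ ε * (J + I)
  have hKk : ε * (J + I) ≤ K := by nlinarith [hsplit1, hleft, h3, h4]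
  rw [← hsplit2, mul_div_assoc, ← hS]
  nlinarith [hIk, hKk]
end

section
/- If f is a unimodal density on [-1,1] with mode c where 0 < c < ε and n₂/n₁ ≥ c, increasing on [-1,c], decreasing on [c,1], with ∫_{-1}^0 f = n₁/(n₁+n₂) and ∫_0^1 f = n₂/(n₁+n₂), then ∫_0^{ε} f ≥ c·n₁/(n₁+n₂) + (ε-c)(n₂ - c n₁)/((1-c)(n₁+n₂)). -/
open Set intervalIntegral

/-- Case II: if `0 < c < ε` and `n₂/n₁ ≥ c`, then
`∫_0^ε f ≥ c·n₁/(n₁+n₂) + (ε-c)(n₂-cn₁)/((1-c)(n₁+n₂))`. -/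
theorem stmt3 (n₁ n₂ c ε : ℝ) (hn₁ : 0 < n₁) (hn₂ : 0 < n₂)
    (hε : ε ∈ Set.Ioo (0:ℝ) 1) (hc : c ∈ Set.Ioo 0 ε) (hr : c ≤ n₂ / n₁)
    (f : ℝ → ℝ)
    (hint : MeasureTheory.IntegrableOn f (Set.Icc (-1) 1))
    (hpos : ∀ x ∈ Set.Icc (-1:ℝ) 1, 0 ≤ f x)
    (hmono : MonotoneOn f (Set.Icc (-1) c))
    (hanti : AntitoneOn f (Set.Icc c 1))
    (hleft : ∫ x in (-1:ℝ)..0, f x = n₁ / (n₁ + n₂))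
    (hright : ∫ x in (0:ℝ)..1, f x = n₂ / (n₁ + n₂)) :
    c * n₁ / (n₁ + n₂) + (ε - c) * (n₂ - c * n₁) / ((1 - c) * (n₁ + n₂))
      ≤ ∫ x in (0:ℝ)..ε, f x := by
  obtain ⟨hε0, hε1⟩ := hε
  obtain ⟨hc0, hcε⟩ := hc
  have hc1 : c < 1 := hcε.trans hε1
  have hS : 0 < n₁ + n₂ := by linarith
  have hii : ∀ a b : ℝ, a ∈ Set.Icc (-1:ℝ) 1 → b ∈ Set.Icc (-1:ℝ) 1 →
      IntervalIntegrable f MeasureTheory.volume a b := by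
    intro a b ha hb
    exact (hint.mono_set (Set.uIcc_subset_Icc ha hb)).intervalIntegrable
  have hm1 : (-1:ℝ) ∈ Set.Icc (-1:ℝ) 1 := by norm_num
  have h0 : (0:ℝ) ∈ Set.Icc (-1:ℝ) 1 := by norm_num
  have hcm : c ∈ Set.Icc (-1:ℝ) 1 := ⟨by linarith, hc1.le⟩
  have hεm : ε ∈ Set.Icc (-1:ℝ) 1 := ⟨by linarith, hε1.le⟩
  have h1m : (1:ℝ) ∈ Set.Icc (-1:ℝ) 1 := by norm_num
  -- f 0 ≥ n₁ / (n₁+n₂)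
  have hf0 : n₁ / (n₁ + n₂) ≤ f 0 := by
    have h1 : ∫ x in (-1:ℝ)..0, f x ≤ ∫ x in (-1:ℝ)..0, f 0 := by
      apply intervalIntegral.integral_mono_on (by norm_num) (hii _ _ hm1 h0)
        intervalIntegrable_const
      intro x hx
      exact hmono ⟨hx.1, hx.2.trans hc0.le⟩ ⟨by norm_num, hc0.le⟩ hx.2
    rw [hleft] at h1
    simpa using h1
  set A := ∫ x in (0:ℝ)..c, f x with hAdef
  set B := ∫ x in c..ε, f x with hBdef
  set C := ∫ x in ε..(1:ℝ), f x with hCdef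
  have hA : n₁ * c / (n₁ + n₂) ≤ A := by
    have h1 : ∫ x in (0:ℝ)..c, (n₁ / (n₁ + n₂)) ≤ ∫ x in (0:ℝ)..c, f x := by
      apply intervalIntegral.integral_mono_on hc0.le intervalIntegrable_const
        (hii _ _ h0 hcm)
      intro x hx
      exact hf0.trans (hmono ⟨by norm_num, hc0.le⟩ ⟨by linarith [hx.1], hx.2⟩ hx.1)
    simpa [mul_comm] using h1
  have hB : (ε - c) * f ε ≤ B := by
    have h1 : ∫ x in c..ε, f ε ≤ ∫ x in c..ε, f x := by
      apply intervalIntegral.integral_mono_on hcε.le intervalIntegrable_const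
        (hii _ _ hcm hεm)
      intro x hx
      exact hanti ⟨hx.1, by linarith [hx.2]⟩ ⟨hcε.le, hε1.le⟩ hx.2
    simpa [mul_comm] using h1
  have hC : C ≤ (1 - ε) * f ε := by
    have h1 : ∫ x in ε..(1:ℝ), f x ≤ ∫ x in ε..(1:ℝ), f ε := by
      apply intervalIntegral.integral_mono_on hε1.le (hii _ _ hεm h1m)
        intervalIntegrable_const
      intro x hx
      exact hanti ⟨hcε.le, hε1.le⟩ ⟨by linarith [hx.1], hx.2⟩ hx.1
    simpa [mul_comm] using h1
  have hfε : 0 ≤ f ε := hpos ε hεm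
  have hsum : A + B + C = n₂ / (n₁ + n₂) := by
    rw [hAdef, hBdef, hCdef,
      intervalIntegral.integral_add_adjacent_intervals (hii _ _ h0 hcm) (hii _ _ hcm hεm),
      intervalIntegral.integral_add_adjacent_intervals (hii _ _ h0 hεm) (hii _ _ hεm h1m),
      hright]
  have hAB : ∫ x in (0:ℝ)..ε, f x = A + B :=
    (intervalIntegral.integral_add_adjacent_intervals (hii _ _ h0 hcm) (hii _ _ hcm hεm)).symm
  rw [hAB]
  -- clear denominators
  have hA' : c * n₁ ≤ A * (n₁ + n₂) := by
    rw [div_le_iff₀ hS] at hA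
    linarith [hA]
  have hsum' : (A + B + C) * (n₁ + n₂) = n₂ := by
    rw [hsum, div_mul_cancel₀ _ hS.ne']
  have hpos' : (0:ℝ) < (1 - c) * (n₁ + n₂) := mul_pos (by linarith) hS
  rw [div_add_div _ _ hS.ne' hpos'.ne', div_le_iff₀ (mul_pos hS hpos')]
  nlinarith [mul_le_mul_of_nonneg_left hC (by linarith : (0:ℝ) ≤ ε - c),
    mul_le_mul_of_nonneg_left hB (by linarith : (0:ℝ) ≤ 1 - ε),
    mul_le_mul_of_nonneg_left hA' (by linarith : (0:ℝ) ≤ 1 - ε),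
    mul_le_mul_of_nonneg_right (mul_le_mul_of_nonneg_left hC (by linarith : (0:ℝ) ≤ ε - c)) hS.le,
    mul_le_mul_of_nonneg_right (mul_le_mul_of_nonneg_left hB (by linarith : (0:ℝ) ≤ 1 - ε)) hS.le,
    mul_pos (sub_pos.2 hε1) hS, mul_pos (sub_pos.2 hcε) hS]
end

section
/- If f is a unimodal density on [-1,1] with mode c where 0 < c < ε and n₂/n₁ < c, increasing on [-1,c], decreasing on [c,1], with ∫_{-1}^0 f = n₁/(n₁+n₂) and ∫_0^1 f = n₂/(n₁+n₂), then ∫_0^{ε} f ≥ ε·n₂/(n₁+n₂). -/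
open Set intervalIntegral

/-- Case III: if `0 < c < ε` and `n₂/n₁ < c`, then `∫_0^ε f ≥ ε·n₂/(n₁+n₂)`. -/
theorem stmt4 (n₁ n₂ c ε : ℝ) (hn₁ : 0 < n₁) (hn₂ : 0 < n₂)
    (hε : ε ∈ Set.Ioo (0:ℝ) 1) (hc : c ∈ Set.Ioo 0 ε) (hr : n₂ / n₁ < c)
    (f : ℝ → ℝ)
    (hint : MeasureTheory.IntegrableOn f (Set.Icc (-1) 1))
    (hpos : ∀ x ∈ Set.Icc (-1:ℝ) 1, 0 ≤ f x)
    (hmono : MonotoneOn f (Set.Icc (-1) c))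
    (hanti : AntitoneOn f (Set.Icc c 1))
    (hleft : ∫ x in (-1:ℝ)..0, f x = n₁ / (n₁ + n₂))
    (hright : ∫ x in (0:ℝ)..1, f x = n₂ / (n₁ + n₂)) :
    ε * n₂ / (n₁ + n₂) ≤ ∫ x in (0:ℝ)..ε, f x := by
  obtain ⟨hc0, hcε⟩ := hc
  obtain ⟨hε0, hε1⟩ := hε
  have hsum : (0:ℝ) < n₁ + n₂ := by linarith
  have hI1 : IntervalIntegrable f MeasureTheory.volume (-1) 0 := by
    apply MeasureTheory.IntegrableOn.intervalIntegrable
    apply hint.mono_set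
    rw [Set.uIcc_of_le (by norm_num : (-1:ℝ) ≤ 0)]
    exact Set.Icc_subset_Icc le_rfl (by norm_num)
  have hI2 : IntervalIntegrable f MeasureTheory.volume 0 c := by
    apply MeasureTheory.IntegrableOn.intervalIntegrable
    apply hint.mono_set
    rw [Set.uIcc_of_le hc0.le]
    exact Set.Icc_subset_Icc (by norm_num) (by linarith)
  have hI3 : IntervalIntegrable f MeasureTheory.volume c ε := by
    apply MeasureTheory.IntegrableOn.intervalIntegrable
    apply hint.mono_set
    rw [Set.uIcc_of_le hcε.le]
    exact Set.Icc_subset_Icc (by linarith) (by linarith)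
  -- f 0 ≥ n₁/(n₁+n₂)
  have hf0 : n₁ / (n₁ + n₂) ≤ f 0 := by
    have h0mem : (0:ℝ) ∈ Set.Icc (-1:ℝ) c := ⟨by norm_num, hc0.le⟩
    have : ∫ x in (-1:ℝ)..0, f x ≤ ∫ x in (-1:ℝ)..0, f 0 := by
      apply intervalIntegral.integral_mono_on (by norm_num) hI1
        intervalIntegrable_const
      intro x hx
      exact hmono ⟨hx.1, le_trans hx.2 hc0.le⟩ h0mem hx.2
    rw [hleft] at this
    simpa using this
  -- ∫_0^c f ≥ c * f 0
  have h2 : c * f 0 ≤ ∫ x in (0:ℝ)..c, f x := by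
    have : ∫ x in (0:ℝ)..c, f 0 ≤ ∫ x in (0:ℝ)..c, f x := by
      apply intervalIntegral.integral_mono_on hc0.le intervalIntegrable_const hI2
      intro x hx
      exact hmono ⟨by norm_num, hc0.le⟩ ⟨by linarith [hx.1], hx.2⟩ hx.1
    simpa using this
  -- ∫_c^ε f ≥ 0
  have h3 : 0 ≤ ∫ x in (c:ℝ)..ε, f x := by
    apply intervalIntegral.integral_nonneg hcε.le
    intro x hx
    exact hpos x ⟨by linarith [hx.1], by linarith [hx.2]⟩
  have hsplit : ∫ x in (0:ℝ)..ε, f x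
      = (∫ x in (0:ℝ)..c, f x) + ∫ x in (c:ℝ)..ε, f x :=
    (intervalIntegral.integral_add_adjacent_intervals hI2 hI3).symm
  have hcn : n₂ < c * n₁ := by
    rwa [div_lt_iff₀ hn₁] at hr
  have : ε * n₂ / (n₁ + n₂) ≤ c * (n₁ / (n₁ + n₂)) := by
    rw [div_le_iff₀ hsum] at *
    have hεn : ε * n₂ ≤ n₂ := by nlinarith
    calc ε * n₂ ≤ n₂ := hεn
      _ ≤ c * n₁ := hcn.le
      _ = c * (n₁ / (n₁ + n₂)) * (n₁ + n₂) := by field_simp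
  calc ε * n₂ / (n₁ + n₂) ≤ c * (n₁ / (n₁ + n₂)) := this
    _ ≤ c * f 0 := by nlinarith
    _ ≤ ∫ x in (0:ℝ)..c, f x := h2
    _ ≤ ∫ x in (0:ℝ)..ε, f x := by rw [hsplit]; linarith
end

section
/- In a finite connected weighted graph with distinct edge weights, every edge of the nearest-neighbor graph (the graph connecting each vertex to its nearest neighbor) is an edge of the minimum spanning tree. -/
open SimpleGraph

private lemma preconn_transfer {V : Type*} {G H : SimpleGraph V}
    (h : ∀ a b, G.Adj a b → H.Reachable a b) (hc : G.Preconnected) : H.Preconnected := by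
  intro a b
  obtain ⟨p⟩ := hc a b
  induction p with
  | nil => exact Reachable.refl _
  | cons h' _ ih => exact (h _ _ h').trans ih

/-- In a complete graph with injective edge weights, every edge of the nearest-neighbor
graph (joining each vertex `u` to the unique vertex `v` minimizing `w {u, ·}`) is an edge
of the minimum spanning tree `T`. -/
theorem stmt8 {V : Type*} [Fintype V] [DecidableEq V]
    (w : Sym2 V → ℝ) (hw : Set.InjOn w (⊤ : SimpleGraph V).edgeSet)
    (T : SimpleGraph V) [DecidableRel T.Adj]
    (hT : T.IsTree)
    (hmin : ∀ (T' : SimpleGraph V) [DecidableRel T'.Adj], T'.IsTree →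
      ∑ e ∈ T.edgeFinset, w e ≤ ∑ e ∈ T'.edgeFinset, w e)
    (u v : V) (huv : u ≠ v)
    (hnn : ∀ x, x ≠ u → x ≠ v → w s(u, v) < w s(u, x)) :
    s(u, v) ∈ T.edgeSet := by
  by_contra hne
  obtain ⟨pw, hpw, hpuniq⟩ := hT.existsUnique_path u v
  cases pw with
  | nil => exact huv rfl
  | @cons _ x _ hadj q =>
    have hxu : x ≠ u := hadj.ne'
    have hxv : x ≠ v := by
      rintro rfl
      exact hne (T.mem_edgeSet.mpr hadj)
    have hlt : w s(u, v) < w s(u, x) := hnn x hxu hxv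
    have heT : s(u, x) ∈ T.edgeFinset := mem_edgeFinset.mpr (T.mem_edgeSet.mpr hadj)
    have hfT : s(u, v) ∉ T.edgeFinset := fun h => hne (mem_edgeFinset.mp h)
    have hef : s(u, v) ≠ s(u, x) := by
      intro h
      rcases Sym2.eq_iff.mp h with ⟨-, h2⟩ | ⟨h1, h2⟩
      · exact hxv h2.symm
      · exact hxu h1.symm
    set S : Finset (Sym2 V) := insert s(u, v) (T.edgeFinset.erase s(u, x)) with hS
    set T' : SimpleGraph V := fromEdgeSet (S : Set (Sym2 V)) with hT'def
    haveI : DecidableRel T'.Adj := Classical.decRel _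
    have hES : T'.edgeSet = (S : Set (Sym2 V)) := by
      rw [hT'def, edgeSet_fromEdgeSet]
      ext ee
      simp only [Set.mem_diff, Set.mem_setOf_eq, Finset.mem_coe, and_iff_left_iff_imp]
      intro hee hdiag
      rcases Finset.mem_insert.mp hee with rfl | h
      · exact huv (Sym2.mk_isDiag_iff.mp hdiag)
      · exact T.not_isDiag_of_mem_edgeSet (mem_edgeFinset.mp (Finset.mem_of_mem_erase h)) hdiag
    have hEF : T'.edgeFinset = S := Finset.coe_injective (by rw [coe_edgeFinset, hES])
    have huvT' : T'.Adj u v := (fromEdgeSet_adj _).mpr ⟨Finset.mem_insert_self _ _, huv⟩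
    -- q avoids the edge s(u,x)
    have hqnoe : s(u, x) ∉ q.edges := fun h =>
      ((Walk.cons_isPath_iff _ _).mp hpw).2 (q.fst_mem_support_of_mem_edges h)
    have hqsub : ∀ e' ∈ q.edges, e' ∈ T'.edgeSet := by
      intro e' he'
      rw [hES]
      refine Finset.mem_coe.mpr (Finset.mem_insert_of_mem (Finset.mem_erase.mpr ⟨?_, ?_⟩))
      · rintro rfl; exact hqnoe he'
      · exact mem_edgeFinset.mpr (q.edges_subset_edgeSet he')
    have hux' : T'.Reachable u x :=
      huvT'.reachable.trans (q.transfer T' hqsub).reachable.symm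
    have hpre : T'.Preconnected := by
      refine preconn_transfer (fun a b hab => ?_) hT.isConnected.preconnected
      by_cases h : s(a, b) = s(u, x)
      · rcases Sym2.eq_iff.mp h with ⟨rfl, rfl⟩ | ⟨rfl, rfl⟩
        · exact hux'
        · exact hux'.symm
      · exact ((fromEdgeSet_adj _).mpr ⟨Finset.mem_insert_of_mem
          (Finset.mem_erase.mpr ⟨h, mem_edgeFinset.mpr (T.mem_edgeSet.mpr hab)⟩), hab.ne⟩).reachable
    have hconn : T'.Connected := by
      haveI := hT.isConnected.nonempty
      exact Connected.mk hpre
    have hbridge : T'.IsBridge s(u, v) := by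
      refine isBridge_iff_forall_walk_mem_edges.mpr ?_
      intro p
      by_contra hfp
      have hsub : ∀ e' ∈ p.edges, e' ∈ T.edgeSet := by
        intro e' he'
        have h1 := p.edges_subset_edgeSet he'
        rw [hES] at h1
        rcases Finset.mem_insert.mp (Finset.mem_coe.mp h1) with rfl | h
        · exact absurd he' hfp
        · exact mem_edgeFinset.mp (Finset.mem_of_mem_erase h)
      have hpe : s(u, x) ∉ p.edges := by
        intro he'
        have h1 := p.edges_subset_edgeSet he'
        rw [hES] at h1
        rcases Finset.mem_insert.mp (Finset.mem_coe.mp h1) with h | h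
        · exact hef h.symm
        · exact (Finset.ne_of_mem_erase h) rfl
      have hPeq : ((p.transfer T hsub).toPath : T.Walk u v) = Walk.cons hadj q :=
        hpuniq _ ((p.transfer T hsub).toPath.prop)
      have heP : s(u, x) ∈ ((p.transfer T hsub).toPath : T.Walk u v).edges := by
        rw [hPeq]; simp
      have h2 : s(u, x) ∈ (p.transfer T hsub).edges :=
        Walk.edges_toPath_subset _ heP
      rw [Walk.edges_transfer] at h2
      exact hpe h2
    have hacyc : T'.IsAcyclic := by
      intro a c hc
      by_cases hfc : s(u, v) ∈ c.edges
      · exact hbridge.notMem_edges_of_isCycle hc hfc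
      · have hsub : ∀ e' ∈ c.edges, e' ∈ T.edgeSet := by
          intro e' he'
          have h1 := c.edges_subset_edgeSet he'
          rw [hES] at h1
          rcases Finset.mem_insert.mp (Finset.mem_coe.mp h1) with rfl | h
          · exact absurd he' hfc
          · exact mem_edgeFinset.mp (Finset.mem_of_mem_erase h)
        exact hT.IsAcyclic (c.transfer T hsub) (hc.transfer hsub)
    have hTree' : T'.IsTree := ⟨hconn, hacyc⟩
    have hsum : ∑ e' ∈ T'.edgeFinset, w e' =
        ∑ e' ∈ T.edgeFinset, w e' - w s(u, x) + w s(u, v) := by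
      rw [hEF, hS, Finset.sum_insert (fun h => hfT (Finset.mem_of_mem_erase h)),
        Finset.sum_erase_eq_sub heT]
      ring
    have hle := hmin T' hTree'
    have key : ∀ (inst : Fintype T'.edgeSet),
        ∑ e ∈ @SimpleGraph.edgeFinset _ T' inst, w e = ∑ e ∈ S, w e := by
      intro inst
      refine Finset.sum_congr ?_ (fun _ _ => rfl)
      apply Finset.coe_injective
      rw [coe_edgeFinset, hES]
    rw [key _] at hle
    rw [hS, Finset.sum_insert (fun h => hfT (Finset.mem_of_mem_erase h)),
      Finset.sum_erase_eq_sub heT] at hle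
    linarith
end
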